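/- Let X be a compact metric space, let f ⊆ X × X be a closed relation on X, and let B ⊆ X be an attractor block for f. Let δ = dist(f, closure(B) × closure(Bᶜ)) (the infimum of distances between points of f and points of closure(B) × closure(Bᶜ) in the product metric space X × X), and suppose δ > 0. Then every closed relation g ⊆ X × X contained in the interior of the δ-neighborhood N_δ(f) = {p ∈ X × X : dist(p, f) < δ} has an attractor A' = ω(B; g) with A' ⊆ B. -/

import Mathlib

/-- The image of a set `S` under a relation `f ⊆ X × X`. -/
def relImage {X : Type*} (f : Set (X × X)) (S : Set X) : Set X :=
  {y | ∃ x ∈ S, (x, y) ∈ f}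

/-- Composition of relations: `relComp g f = {(x,z) | ∃ y, (x,y) ∈ f ∧ (y,z) ∈ g}`. -/
def relComp {X : Type*} (g f : Set (X × X)) : Set (X × X) :=
  {p | ∃ y, (p.1, y) ∈ f ∧ (y, p.2) ∈ g}

/-- Iterates of a relation: `f⁰ = id`, `fⁿ⁺¹ = f ∘ fⁿ`. -/
def relIter {X : Type*} (f : Set (X × X)) : ℕ → Set (X × X)
  | 0 => {p | p.1 = p.2}
  | n + 1 => relComp f (relIter f n)

/-- A set `K` is confining for `f` if `f(K) ⊆ K`. -/
def Confining {X : Type*} (f : Set (X × X)) (K : Set X) : Prop :=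
  relImage f K ⊆ K

/-- The omega limit set `ω(S; f)`: the intersection of all closed confining sets `K`
with `fⁿ(S) ⊆ K` for some `n ≥ 0`. -/
def relOmegaLimit {X : Type*} [TopologicalSpace X] (f : Set (X × X)) (S : Set X) : Set X :=
  ⋂₀ {K | IsClosed K ∧ Confining f K ∧ ∃ n : ℕ, relImage (relIter f n) S ⊆ K}

/-- `B` is an attractor block for `f` if `f(closure B) ⊆ interior B`. -/
def IsAttractorBlock {X : Type*} [TopologicalSpace X] (f : Set (X × X)) (B : Set X) : Prop :=
  relImage f (closure B) ⊆ interior B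

/-- `A` is an attractor for `f` if `f(A) = A` and there is a neighborhood `U` of `A`
with `ω(U; f) = A`. -/
def IsAttractor {X : Type*} [TopologicalSpace X] (f : Set (X × X)) (A : Set X) : Prop :=
  relImage f A = A ∧ ∃ U ∈ nhdsSet A, relOmegaLimit f U = A

section AuxLemmas

variable {X : Type*}

theorem relImage_mono (f : Set (X × X)) {S T : Set X} (h : S ⊆ T) :
    relImage f S ⊆ relImage f T := fun _ ⟨x, hx, hxy⟩ => ⟨x, h hx, hxy⟩

theorem relImage_comp (g f : Set (X × X)) (S : Set X) :
    relImage (relComp g f) S = relImage g (relImage f S) := by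
  ext y
  simp only [relImage, relComp, Set.mem_setOf_eq]
  constructor
  · rintro ⟨x, hx, z, hz1, hz2⟩; exact ⟨z, ⟨x, hx, hz1⟩, hz2⟩
  · rintro ⟨z, ⟨x, hx, hz1⟩, hz2⟩; exact ⟨x, hx, z, hz1, hz2⟩

theorem relImage_iter_zero (f : Set (X × X)) (S : Set X) :
    relImage (relIter f 0) S = S := by
  ext y
  simp only [relImage, relIter, Set.mem_setOf_eq]
  constructor
  · rintro ⟨x, hx, h⟩; exact h ▸ hx
  · intro hy; exact ⟨y, hy, rfl⟩

theorem relImage_iter_succ (f : Set (X × X)) (n : ℕ) (S : Set X) :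
    relImage (relIter f (n + 1)) S = relImage f (relImage (relIter f n) S) := by
  show relImage (relComp f (relIter f n)) S = _
  exact relImage_comp f (relIter f n) S

theorem relImage_iter_succ' (f : Set (X × X)) (n : ℕ) (S : Set X) :
    relImage (relIter f (n + 1)) S = relImage (relIter f n) (relImage f S) := by
  induction n with
  | zero => rw [relImage_iter_succ, relImage_iter_zero, relImage_iter_zero]
  | succ n ih => rw [relImage_iter_succ, ih, ← relImage_iter_succ]

theorem relImage_eq_image (g : Set (X × X)) (K : Set X) :
    relImage g K = Prod.snd '' (g ∩ K ×ˢ (Set.univ : Set X)) := by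
  ext y
  simp only [relImage, Set.mem_setOf_eq, Set.mem_image, Set.mem_inter_iff, Set.mem_prod,
    Set.mem_univ, and_true]
  constructor
  · rintro ⟨x, hx, hxy⟩; exact ⟨(x, y), ⟨hxy, hx⟩, rfl⟩
  · rintro ⟨⟨x, y'⟩, ⟨hp, hx⟩, rfl⟩; exact ⟨x, hx, hp⟩

theorem isCompact_relImage [MetricSpace X] [CompactSpace X] {g : Set (X × X)}
    (hg : IsClosed g) {K : Set X} (hK : IsClosed K) : IsCompact (relImage g K) := by
  rw [relImage_eq_image]
  exact ((hg.inter (hK.prod isClosed_univ)).isCompact).image continuous_snd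

theorem isClosed_relImage [MetricSpace X] [CompactSpace X] {g : Set (X × X)}
    (hg : IsClosed g) {K : Set X} (hK : IsClosed K) : IsClosed (relImage g K) :=
  (isCompact_relImage hg hK).isClosed

/-- The key dynamical lemma: if `B` is an attractor block for a closed relation `g`
on a compact metric space, then `ω(B; g)` is an attractor contained in `B`. -/
theorem attractor_of_block [MetricSpace X] [CompactSpace X]
    (g : Set (X × X)) (hg : IsClosed g) (B : Set X)
    (hgB : relImage g (closure B) ⊆ interior B) :
    IsAttractor g (relOmegaLimit g B) ∧ relOmegaLimit g B ⊆ B := by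
  set Adm : Set (Set X) :=
    {K | IsClosed K ∧ Confining g K ∧ ∃ n : ℕ, relImage (relIter g n) B ⊆ K} with hAdm
  set A : Set X := relOmegaLimit g B with hA
  have hA' : A = ⋂₀ Adm := rfl
  -- iterate step for confining sets
  have hstep : ∀ K ∈ Adm, ∀ n, relImage (relIter g n) B ⊆ K →
      relImage (relIter g (n + 1)) B ⊆ K := by
    intro K hK n hn
    rw [relImage_iter_succ]
    exact (relImage_mono g hn).trans hK.2.1
  -- closure B is admissible
  have hclB : closure B ∈ Adm := by
    refine ⟨isClosed_closure, fun y hy => ?_, 0, ?_⟩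
    · exact subset_closure (interior_subset (hgB hy))
    · rw [relImage_iter_zero]; exact subset_closure
  -- C = g(closure B) is admissible and inside interior B
  have hCadm : relImage g (closure B) ∈ Adm := by
    refine ⟨isClosed_relImage hg isClosed_closure, ?_, 1, ?_⟩
    · exact relImage_mono g (hgB.trans (interior_subset.trans subset_closure))
    · rw [relImage_iter_succ, relImage_iter_zero]
      exact relImage_mono g subset_closure
  have hAint : A ⊆ interior B := by
    rw [hA']
    exact (Set.sInter_subset_of_mem hCadm).trans hgB
  have hAB : A ⊆ B := hAint.trans interior_subset
  -- admissible sets are closed under intersection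
  have hinter : ∀ K₁ ∈ Adm, ∀ K₂ ∈ Adm, K₁ ∩ K₂ ∈ Adm := by
    rintro K₁ hK₁ K₂ hK₂
    obtain ⟨n₁, hn₁⟩ := hK₁.2.2
    obtain ⟨n₂, hn₂⟩ := hK₂.2.2
    have hup : ∀ K ∈ Adm, ∀ n m, n ≤ m → relImage (relIter g n) B ⊆ K →
        relImage (relIter g m) B ⊆ K := by
      intro K hK n m hnm hn
      induction m with
      | zero => obtain rfl := Nat.le_zero.mp hnm; exact hn
      | succ m ih =>
        rcases Nat.lt_or_ge n (m + 1) with h | h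
        · exact hstep K hK m (ih (Nat.lt_succ_iff.mp h))
        · obtain rfl : n = m + 1 := le_antisymm hnm h
          exact hn
    refine ⟨hK₁.1.inter hK₂.1, ?_, max n₁ n₂, Set.subset_inter ?_ ?_⟩
    · exact fun y hy => ⟨hK₁.2.1 (relImage_mono g Set.inter_subset_left hy),
        hK₂.2.1 (relImage_mono g Set.inter_subset_right hy)⟩
    · exact hup K₁ hK₁ n₁ _ (le_max_left _ _) hn₁
    · exact hup K₂ hK₂ n₂ _ (le_max_right _ _) hn₂
  -- g(A) ⊆ A
  have hgA_sub : relImage g A ⊆ A := by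
    rintro y ⟨x, hx, hxy⟩
    rw [hA']
    intro K hK
    exact hK.2.1 ⟨x, Set.mem_sInter.mp (hA' ▸ hx) K hK, hxy⟩
  -- A ⊆ g(A)
  have hA_sub : A ⊆ relImage g A := by
    intro a ha
    -- family of compact sets
    haveI : Nonempty {K : Set X // K ∈ Adm} := ⟨⟨closure B, hclB⟩⟩
    set t : {K : Set X // K ∈ Adm} → Set X := fun K => K.1 ∩ {x | (x, a) ∈ g} with ht
    have hgsec : IsClosed {x : X | (x, a) ∈ g} :=
      hg.preimage (Continuous.prodMk continuous_id continuous_const)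
    have htcl : ∀ K, IsClosed (t K) := fun K => K.2.1.inter hgsec
    have htc : ∀ K, IsCompact (t K) := fun K => (htcl K).isCompact
    have htn : ∀ K, (t K).Nonempty := by
      rintro ⟨K, hK⟩
      by_contra hemp
      rw [Set.not_nonempty_iff_eq_empty] at hemp
      -- then K ∩ g(K) is admissible and excludes a
      have hK'' : K ∩ relImage g K ∈ Adm := by
        obtain ⟨n, hn⟩ := hK.2.2
        refine ⟨hK.1.inter (isClosed_relImage hg hK.1), ?_, n + 1, ?_⟩
        · intro y hy
          exact ⟨hK.2.1 (relImage_mono g Set.inter_subset_left hy),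
            relImage_mono g Set.inter_subset_left hy⟩
        · rw [relImage_iter_succ]
          exact Set.subset_inter ((relImage_mono g hn).trans hK.2.1) (relImage_mono g hn)
      have haK : a ∈ K ∩ relImage g K := ha _ hK''
      obtain ⟨x, hxK, hxa⟩ := haK.2
      have : x ∈ t ⟨K, hK⟩ := ⟨hxK, hxa⟩
      rw [hemp] at this
      exact this
    have htd : Directed (· ⊇ ·) t := by
      rintro K₁ K₂
      exact ⟨⟨K₁.1 ∩ K₂.1, hinter _ K₁.2 _ K₂.2⟩,
        fun x hx => ⟨hx.1.1, hx.2⟩, fun x hx => ⟨hx.1.2, hx.2⟩⟩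
    obtain ⟨x, hx⟩ :=
      IsCompact.nonempty_iInter_of_directed_nonempty_isCompact_isClosed t htd htn htc htcl
    simp only [Set.mem_iInter] at hx
    have hxA : x ∈ A := by
      rw [hA']
      intro K hK
      exact (hx ⟨K, hK⟩).1
    exact ⟨x, hxA, (hx ⟨closure B, hclB⟩).2⟩
  -- ω(interior B) = ω(B)
  have hfam : {K | IsClosed K ∧ Confining g K ∧
      ∃ n : ℕ, relImage (relIter g n) (interior B) ⊆ K} = Adm := by
    ext K
    simp only [Set.mem_setOf_eq, hAdm]
    constructor
    · rintro ⟨h1, h2, n, h3⟩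
      refine ⟨h1, h2, n + 1, ?_⟩
      rw [relImage_iter_succ']
      refine (relImage_mono _ ?_).trans h3
      exact (relImage_mono g subset_closure).trans hgB
    · rintro ⟨h1, h2, n, h3⟩
      exact ⟨h1, h2, n, (relImage_mono _ interior_subset).trans h3⟩
  have homega : relOmegaLimit g (interior B) = A := by
    rw [hA']
    exact congrArg Set.sInter hfam
  refine ⟨⟨Set.Subset.antisymm hgA_sub hA_sub, interior B, ?_, homega⟩, hAB⟩
  exact (isOpen_interior.mem_nhdsSet).mpr hAint

end AuxLemmas

/-- If `X` is a compact metric space, `f` a closed relation, `B` an attractor block for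
`f`, and `δ = dist(f, closure B × closure Bᶜ) > 0`, then every closed relation `g`
contained in the interior of the `δ`-neighborhood of `f` has the attractor
`ω(B; g) ⊆ B`. -/
theorem attractor_of_close_relation {X : Type*} [MetricSpace X] [CompactSpace X]
    (f : Set (X × X)) (hf : IsClosed f)
    (B : Set X) (hB : IsAttractorBlock f B)
    (δ : ℝ) (hδ : δ = sInf ((fun p => Metric.infDist p (closure B ×ˢ closure Bᶜ)) '' f))
    (hδpos : 0 < δ)
    (g : Set (X × X)) (hg : IsClosed g)
    (hgV : g ⊆ interior {p : X × X | Metric.infDist p f < δ}) :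
    IsAttractor g (relOmegaLimit g B) ∧ relOmegaLimit g B ⊆ B := by
  -- f is nonempty, otherwise δ = 0
  have hfne : f.Nonempty := by
    by_contra h
    rw [Set.not_nonempty_iff_eq_empty] at h
    subst h
    have h0 : δ = 0 := by
      rw [hδ]
      rw [Set.image_empty, Real.sInf_empty]
    linarith
  -- B is an attractor block for g
  have hgB : relImage g (closure B) ⊆ interior B := by
    rintro y ⟨x, hx, hxy⟩
    by_contra hy
    have hy' : y ∈ closure Bᶜ := by
      rw [closure_compl]
      exact hy
    have hmem : ((x, y) : X × X) ∈ closure B ×ˢ closure Bᶜ := ⟨hx, hy'⟩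
    have hlt : Metric.infDist (x, y) f < δ :=
      interior_subset (s := {p : X × X | Metric.infDist p f < δ}) (hgV hxy)
    obtain ⟨q, hqf, hq⟩ := (hf.isCompact).exists_infDist_eq_dist hfne (x, y)
    have h1 : δ ≤ Metric.infDist q (closure B ×ˢ closure Bᶜ) := by
      rw [hδ]
      exact csInf_le ⟨0, by rintro _ ⟨_, _, rfl⟩; exact Metric.infDist_nonneg⟩
        (Set.mem_image_of_mem _ hqf)
    have h2 : Metric.infDist q (closure B ×ˢ closure Bᶜ) ≤ dist q (x, y) :=
      Metric.infDist_le_dist_of_mem hmem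
    rw [dist_comm] at h2
    rw [hq] at hlt
    linarith
  exact attractor_of_block g hg B hgB
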